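/- For the Poisson bivector π = ∂_φ ∧ ∂_{p_φ} + (cos φ/Δ)(J sin φ · p_θ − m r² p_ψ) ∂_{p_φ} ∧ ∂_{p_θ} on ℝ⁴ with Δ(φ) = m r² − J sin²φ, the functions 𝒥₁ = (p_θ − p_ψ sin φ)/√(2Δ) and 𝒥₂ = p_ψ are Casimir functions, i.e. π^♯(d𝒥₁) = 0 and π^♯(d𝒥₂) = 0. -/

import Mathlib

/-!
Writing `c` for the coefficient of `∂_{p_φ} ∧ ∂_{p_θ}`, a function `f` is a Casimir of `π` exactly
when `∂_{p_φ} f = 0` and `∂_φ f = c ∂_{p_θ} f`. For `𝒥₂ = p_ψ` both sides vanish. For `𝒥₁` the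
`φ`-derivative of `(p_θ - p_ψ sin φ)(2Δ)^{-1/2}` is
`cos φ (J sin φ (p_θ - p_ψ sin φ) - Δ p_ψ) / (Δ √(2Δ))`, and `Δ + J sin² φ = m r²` turns the
numerator into `cos φ (J sin φ p_θ - m r² p_ψ)`, i.e. `c / √(2Δ) = c ∂_{p_θ} 𝒥₁`.
-/

open Real

theorem fderiv_apply_single_eq_deriv_update {𝕜 ι F : Type*} [NontriviallyNormedField 𝕜]
    [Fintype ι] [DecidableEq ι] [NormedAddCommGroup F] [NormedSpace 𝕜 F]
    {f : (ι → 𝕜) → F} {x : ι → 𝕜} (hf : DifferentiableAt 𝕜 f x) (i : ι) :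
    fderiv 𝕜 f x (Pi.single i 1) = deriv (fun t => f (Function.update x i t)) (x i) := by
  have hf' : DifferentiableAt 𝕜 f (Function.update x i (x i)) := by
    rwa [Function.update_eq_self]
  have h := hf'.hasFDerivAt.comp_hasDerivAt (x i) (hasDerivAt_update x i (x i))
  rw [Function.update_eq_self] at h
  exact h.deriv.symm

theorem sub_mul_sin_sq_pos {a J : ℝ} (hJ : 0 ≤ J) (hJa : J < a) (φ : ℝ) :
    0 < a - J * sin φ ^ 2 := by
  nlinarith [sin_sq_le_one φ]

/-- `∂_φ ∧ ∂_{p_φ} + c ∂_{p_φ} ∧ ∂_{p_θ}` in the coordinates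
`(φ, p_φ, p_θ, p_ψ) = (x 0, x 1, x 2, x 3)`. -/
def snakeboardBivector (c : ℝ) : Fin 4 → Fin 4 → ℝ := fun i j =>
  if i = 0 ∧ j = 1 then 1
  else if i = 1 ∧ j = 0 then -1
  else if i = 1 ∧ j = 2 then c
  else if i = 2 ∧ j = 1 then -c
  else 0

theorem sum_snakeboardBivector_mul_eq_zero_iff (c : ℝ) (D : Fin 4 → ℝ) :
    (∀ j, ∑ i, snakeboardBivector c i j * D i = 0) ↔ D 1 = 0 ∧ D 0 = c * D 2 := by
  constructor
  · intro h
    have h0 : -D 1 = 0 := by simpa [Fin.sum_univ_four, snakeboardBivector] using h 0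
    have h1 : D 0 - c * D 2 = 0 := by
      simpa [Fin.sum_univ_four, snakeboardBivector, sub_eq_add_neg] using h 1
    exact ⟨neg_eq_zero.mp h0, sub_eq_zero.mp h1⟩
  · rintro ⟨h1, h0⟩ j
    fin_cases j <;> simp [Fin.sum_univ_four, snakeboardBivector, h1, h0]

theorem hasDerivAt_div_sqrt_two_mul_sub_mul_sin_sq {a J p q φ : ℝ}
    (hΔ : 0 < a - J * sin φ ^ 2) :
    HasDerivAt (fun φ => (p - q * sin φ) / √(2 * (a - J * sin φ ^ 2)))
      (cos φ / (a - J * sin φ ^ 2) * (J * sin φ * p - a * q) / √(2 * (a - J * sin φ ^ 2))) φ := by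
  have hnum := ((hasDerivAt_sin φ).const_mul q).const_sub p
  have hrad := ((((hasDerivAt_sin φ).fun_pow 2).const_mul J).const_sub a).const_mul 2
  have hsqrt := hrad.sqrt (by positivity)
  refine (hnum.fun_div hsqrt (by positivity)).congr_deriv ?_
  have hsq : √(2 * (a - J * sin φ ^ 2)) ^ 2 = 2 * (a - J * sin φ ^ 2) := sq_sqrt (by positivity)
  field_simp
  rw [hsq]
  ring

theorem stmt12_general (m r J : ℝ) (hJ : 0 < J)
    (hmrJ : J < m * r ^ 2) :
    let Δ : ℝ → ℝ := fun φ => m * r ^ 2 - J * Real.sin φ ^ 2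
    let P : (Fin 4 → ℝ) → Fin 4 → Fin 4 → ℝ := fun x i j =>
      if i = 0 ∧ j = 1 then 1
      else if i = 1 ∧ j = 0 then -1
      else if i = 1 ∧ j = 2 then
        Real.cos (x 0) / Δ (x 0) * (J * Real.sin (x 0) * x 2 - m * r ^ 2 * x 3)
      else if i = 2 ∧ j = 1 then
        -(Real.cos (x 0) / Δ (x 0) * (J * Real.sin (x 0) * x 2 - m * r ^ 2 * x 3))
      else 0
    let J₁ : (Fin 4 → ℝ) → ℝ := fun x =>
      (x 2 - x 3 * Real.sin (x 0)) / Real.sqrt (2 * Δ (x 0))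
    let J₂ : (Fin 4 → ℝ) → ℝ := fun x => x 3
    ∀ (x : Fin 4 → ℝ) (j : Fin 4),
      (∑ i : Fin 4, P x i j * fderiv ℝ J₁ x (Pi.single i 1)) = 0 ∧
      (∑ i : Fin 4, P x i j * fderiv ℝ J₂ x (Pi.single i 1)) = 0 := by
  intro Δ P J₁ J₂ x
  have hΔ : 0 < Δ (x 0) := sub_mul_sin_sq_pos hJ.le hmrJ (x 0)
  set c := cos (x 0) / Δ (x 0) * (J * sin (x 0) * x 2 - m * r ^ 2 * x 3)
  have hP : P x = snakeboardBivector c := rfl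
  have hJ₁ : DifferentiableAt ℝ J₁ x := by
    have h2Δ : 2 * Δ (x 0) ≠ 0 := by positivity
    have hsqrt : √(2 * Δ (x 0)) ≠ 0 := by positivity
    simp only [J₁, Δ] at h2Δ hsqrt ⊢
    fun_prop (disch := assumption)
  have hJ₂ : DifferentiableAt ℝ J₂ x := by fun_prop
  rw [forall_and, hP]
  refine ⟨(sum_snakeboardBivector_mul_eq_zero_iff _ _).mpr ?_,
    (sum_snakeboardBivector_mul_eq_zero_iff _ _).mpr ?_⟩
  · have h₀ : HasDerivAt (fun t => J₁ (Function.update x 0 t)) (c / √(2 * Δ (x 0))) (x 0) :=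
      hasDerivAt_div_sqrt_two_mul_sub_mul_sin_sq hΔ
    have h₂ : HasDerivAt (fun t => J₁ (Function.update x 2 t)) (1 / √(2 * Δ (x 0))) (x 2) :=
      ((hasDerivAt_id (x 2)).sub_const (x 3 * sin (x 0))).div_const √(2 * Δ (x 0))
    simp only [fderiv_apply_single_eq_deriv_update hJ₁, h₀.deriv, h₂.deriv]
    refine ⟨?_, (mul_one_div c _).symm⟩
    simp [J₁]
  · simp [fderiv_apply_single_eq_deriv_update hJ₂, J₂]

/-- The snakeboard horizontal gauge momenta `𝒥₁ = (p_θ - p_ψ sin φ)/√(2Δ)` and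
`𝒥₂ = p_ψ` are Casimirs of the reduced Poisson bivector
`π = ∂_φ ∧ ∂_{p_φ} + (cos φ/Δ)(J sin φ p_θ - m r² p_ψ) ∂_{p_φ} ∧ ∂_{p_θ}`. -/
theorem stmt12 (m r J : ℝ) (hm : 0 < m) (hr : 0 < r) (hJ : 0 < J)
    (hmrJ : J < m * r ^ 2) :
    let Δ : ℝ → ℝ := fun φ => m * r ^ 2 - J * Real.sin φ ^ 2
    let P : (Fin 4 → ℝ) → Fin 4 → Fin 4 → ℝ := fun x i j =>
      if i = 0 ∧ j = 1 then 1
      else if i = 1 ∧ j = 0 then -1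
      else if i = 1 ∧ j = 2 then
        Real.cos (x 0) / Δ (x 0) * (J * Real.sin (x 0) * x 2 - m * r ^ 2 * x 3)
      else if i = 2 ∧ j = 1 then
        -(Real.cos (x 0) / Δ (x 0) * (J * Real.sin (x 0) * x 2 - m * r ^ 2 * x 3))
      else 0
    let J₁ : (Fin 4 → ℝ) → ℝ := fun x =>
      (x 2 - x 3 * Real.sin (x 0)) / Real.sqrt (2 * Δ (x 0))
    let J₂ : (Fin 4 → ℝ) → ℝ := fun x => x 3
    ∀ (x : Fin 4 → ℝ) (j : Fin 4),
      (∑ i : Fin 4, P x i j * fderiv ℝ J₁ x (Pi.single i 1)) = 0 ∧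
      (∑ i : Fin 4, P x i j * fderiv ℝ J₂ x (Pi.single i 1)) = 0 :=
  stmt12_general m r J hJ hmrJ
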